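/- Let p ≡ 1 (mod 4) be a prime, let K ≤ (p+1)/2 and 0 ≤ δ < 1, and suppose the Paley matrix Φ_p has the (K, δ)-restricted isometry property. Then every clique S of the Paley graph G_p with |S| ≤ K satisfies |S| ≤ δ·√p + 1. -/

import Mathlib

open Finset

/-- Quadratic character of `ZMod p`. -/
noncomputable def paleyChar (p : ℕ) (x : ZMod p) : ℤ :=
  open Classical in
  if x = 0 then 0 else if IsSquare x then 1 else -1

/-- Canonical additive character of `ZMod p`. -/
noncomputable def paleyPsi (p : ℕ) (x : ZMod p) : ℂ :=
  Complex.exp (2 * Real.pi * Complex.I * (x.val : ℂ) / p)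

/-- The Paley matrix with respect to a labelling `a` of `𝔽_p` and a labelling `b` of the
nonzero quadratic residues.  It has `(p-1)/2 + 1 = (p+1)/2` rows and `p + 1` columns. -/
noncomputable def paleyMatrix (p : ℕ) (a : Fin p → ZMod p) (b : Fin ((p - 1) / 2) → ZMod p) :
    Matrix (Fin ((p - 1) / 2 + 1)) (Fin (p + 1)) ℂ := fun i j =>
  Fin.cases
    (if (j : ℕ) < p then (1 : ℂ) / Real.sqrt p
     else Complex.I ^ (if p % 4 = 3 then 1 else 0))
    (fun k =>
      if hj : (j : ℕ) < p then (Real.sqrt (2 / p) : ℂ) * paleyPsi p (b k * a ⟨j, hj⟩)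
      else 0) i

/-- `x` has at most `K` nonzero entries. -/
def SparseLe {N : ℕ} (K : ℕ) (x : Fin N → ℂ) : Prop :=
  ∃ s : Finset (Fin N), s.card ≤ K ∧ ∀ j ∉ s, x j = 0

/-- The `(K, δ)`-restricted isometry property. -/
def RIP {M N : ℕ} (Φ : Matrix (Fin M) (Fin N) ℂ) (K : ℕ) (δ : ℝ) : Prop :=
  ∀ x : Fin N → ℂ, SparseLe K x →
    (1 - δ) * ∑ j, ‖x j‖ ^ 2 ≤ ∑ m, ‖∑ j, Φ m j * x j‖ ^ 2 ∧
      ∑ m, ‖∑ j, Φ m j * x j‖ ^ 2 ≤ (1 + δ) * ∑ j, ‖x j‖ ^ 2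

/-! Test the restricted isometry property on the indicator vector `x` of a clique `S`, `t = #S`.
The row of `Φ x` indexed by a residue `c` is `√(2/p) ∑_{v ∈ S} ψ(c v)`; summing the squared
moduli over all residues, the diagonal terms give `t (p - 1)/2`, and because every difference
`v - w` in a clique is a nonzero square, each off-diagonal term equals `η = ∑_{c square} ψ(c)`.
Hence `‖Φ x‖² = t + t (t - 1) g / p` with `g = 2η + 1` the quadratic Gauss sum. For
`p ≡ 1 (mod 4)` we have `g² = p`, so `g = ±√p`, and `|‖Φ x‖² - t| ≤ δ t` becomes
`t (t - 1) / √p ≤ δ t`. -/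

lemma sum_sum_eq_of_diag_of_offDiag {ι R : Type*} [Ring R] {s : Finset ι} {f : ι → ι → R}
    {A B : R} (hdiag : ∀ i ∈ s, f i i = A) (hoff : ∀ i ∈ s, ∀ j ∈ s, i ≠ j → f i j = B) :
    ∑ i ∈ s, ∑ j ∈ s, f i j = #s * A + #s * (#s - 1) * B := by
  classical
  have hrow : ∀ i ∈ s, ∑ j ∈ s, f i j = A + (#s - 1) * B := by
    intro i hi
    rw [← add_sum_erase s _ hi, hdiag i hi,
      sum_congr rfl fun j hj => hoff i hi j (mem_of_mem_erase hj) (ne_of_mem_erase hj).symm,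
      sum_const, card_erase_of_mem hi, nsmul_eq_mul, Nat.cast_pred (card_pos.mpr ⟨i, hi⟩)]
  rw [sum_congr rfl hrow, sum_const, nsmul_eq_mul, mul_add, mul_assoc]

lemma sum_norm_sq_sum_addChar_mul {R : Type*} [CommRing R] [Finite R] (ψ : AddChar R ℂ)
    (Q S : Finset R) :
    ((∑ c ∈ Q, ‖∑ v ∈ S, ψ (c * v)‖ ^ 2 : ℝ) : ℂ) =
      ∑ v ∈ S, ∑ w ∈ S, ∑ c ∈ Q, ψ (c * (v - w)) := by
  push_cast
  simp_rw [← Complex.mul_conj', map_sum, ← AddChar.map_neg_eq_conj, sum_mul_sum,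
    ← AddChar.map_add_eq_mul, mul_sub, sub_eq_add_neg, ← mul_neg]
  rw [sum_comm]
  exact sum_congr rfl fun v _ => sum_comm

lemma le_mul_add_one_of_near_isometry {t δ s r E : ℝ} (hs : 0 < s) (hδ : 0 ≤ δ) (ht : 0 ≤ t)
    (hr : r = s ∨ r = -s) (hE : E = t + t * (t - 1) * r / s ^ 2)
    (hlow : (1 - δ) * t ≤ E) (hupp : E ≤ (1 + δ) * t) : t ≤ δ * s + 1 := by
  have hdev : t * (t - 1) / s ≤ δ * t := by
    rcases hr with rfl | rfl
    · have : t * (t - 1) * r / r ^ 2 = t * (t - 1) / r := by field_simp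
      linarith
    · have : t * (t - 1) * -s / s ^ 2 = -(t * (t - 1) / s) := by field_simp
      linarith
  rw [div_le_iff₀ hs] at hdev
  rcases ht.eq_or_lt with rfl | htpos
  · positivity
  · nlinarith

section FiniteField

variable {F : Type*} [Field F] [Fintype F] [DecidableEq F]

variable (F) in
def nonzeroSquares : Finset F := {x | x ≠ 0 ∧ IsSquare x}

@[simp]
lemma mem_nonzeroSquares {x : F} : x ∈ nonzeroSquares F ↔ x ≠ 0 ∧ IsSquare x := by
  simp [nonzeroSquares]

lemma sum_nonzeroSquares_mul {M : Type*} [AddCommMonoid M] {d : F} (hd : d ∈ nonzeroSquares F)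
    (f : F → M) : ∑ c ∈ nonzeroSquares F, f (c * d) = ∑ c ∈ nonzeroSquares F, f c := by
  obtain ⟨hd0, hds⟩ := mem_nonzeroSquares.mp hd
  refine sum_nbij' (· * d) (· * d⁻¹) (fun c hc => ?_) (fun c hc => ?_) (fun c _ => ?_)
    (fun c _ => ?_) fun _ _ => rfl
  · obtain ⟨hc0, hcs⟩ := mem_nonzeroSquares.mp hc
    exact mem_nonzeroSquares.mpr ⟨mul_ne_zero hc0 hd0, hcs.mul hds⟩
  · obtain ⟨hc0, hcs⟩ := mem_nonzeroSquares.mp hc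
    exact mem_nonzeroSquares.mpr ⟨mul_ne_zero hc0 (inv_ne_zero hd0), hcs.mul hds.inv⟩
  · field_simp
  · field_simp

lemma sum_norm_sq_sum_addChar_mul_of_pairwise_isSquare (ψ : AddChar F ℂ) {S : Finset F}
    (hS : (S : Set F).Pairwise fun v w => IsSquare (v - w)) :
    ((∑ c ∈ nonzeroSquares F, ‖∑ v ∈ S, ψ (c * v)‖ ^ 2 : ℝ) : ℂ) =
      #S * #(nonzeroSquares F) + #S * (#S - 1) * ∑ c ∈ nonzeroSquares F, ψ c := by
  rw [sum_norm_sq_sum_addChar_mul]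
  refine sum_sum_eq_of_diag_of_offDiag (fun v _ => ?_) fun v hv w hw hvw => ?_
  · simp
  · exact sum_nonzeroSquares_mul (mem_nonzeroSquares.mpr ⟨sub_ne_zero.mpr hvw, hS hv hw hvw⟩)
      fun c => ψ c

variable {R : Type*} [CommRing R]

lemma quadraticChar_add_one_eq (x : F) :
    ((quadraticChar F x : ℤ) : R) + 1 = if x = 0 then 1 else if IsSquare x then 2 else 0 := by
  by_cases hx : x = 0
  · simp [hx]
  by_cases hsq : IsSquare x
  · rw [(quadraticChar_one_iff_isSquare hx).mpr hsq]
    norm_num [hx, hsq]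
  · rw [quadraticChar_neg_one_iff_not_isSquare.mpr hsq]
    simp [hx, hsq]

variable [IsDomain R]

lemma gaussSum_quadraticChar_eq_two_mul_sum_add_one {ψ : AddChar F R} (hψ : ψ ≠ 1) :
    gaussSum ((quadraticChar F).ringHomComp (Int.castRingHom R)) ψ =
      2 * ∑ c ∈ nonzeroSquares F, ψ c + 1 := by
  have hsum : gaussSum ((quadraticChar F).ringHomComp (Int.castRingHom R)) ψ =
      ∑ x, (((quadraticChar F x : ℤ) : R) + 1) * ψ x := by
    simp only [add_mul, one_mul, sum_add_distrib, AddChar.sum_eq_zero_of_ne_one hψ, add_zero]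
    rfl
  rw [hsum]
  simp only [quadraticChar_add_one_eq, ite_mul, one_mul, zero_mul]
  rw [sum_ite, filter_eq', if_pos (mem_univ _), sum_singleton, AddChar.map_zero_eq_one,
    ← sum_filter, filter_filter, ← mul_sum, add_comm]
  rfl

lemma gaussSum_quadraticChar_sq [CharZero R] (hF : ringChar F ≠ 2) (hneg : IsSquare (-1 : F))
    {ψ : AddChar F R} (hψ : ψ ≠ 1) :
    gaussSum ((quadraticChar F).ringHomComp (Int.castRingHom R)) ψ ^ 2 = Fintype.card F := by
  rw [gaussSum_sq _ ((quadraticChar_isQuadratic F).comp _) (AddChar.IsPrimitive.of_ne_one hψ)]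
  · rw [MulChar.ringHomComp_apply,
      (quadraticChar_one_iff_isSquare (neg_ne_zero.mpr one_ne_zero)).mpr hneg, map_one, one_mul]
  · exact (MulChar.ringHomComp_ne_one_iff Int.cast_injective).mpr (quadraticChar_ne_one hF)

end FiniteField

section ColumnIndicator

variable {n : ℕ} {α : Type*} [DecidableEq α]

def columnIndicator (a : Fin n → α) (S : Finset α) : Fin (n + 1) → ℂ :=
  Fin.snoc (fun i => if a i ∈ S then 1 else 0) 0

variable {a : Fin n → α} (S : Finset α)

lemma sparseLe_columnIndicator (ha : Function.Bijective a) {K : ℕ} (hS : #S ≤ K) :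
    SparseLe K (columnIndicator a S) := by
  let e := Equiv.ofBijective a ha
  refine ⟨(S.map e.symm.toEmbedding).map Fin.castSuccEmb, by simpa using hS, fun j hj => ?_⟩
  induction j using Fin.lastCases with
  | last => simp [columnIndicator]
  | cast i =>
    have : a i ∉ S := fun hi => hj (mem_map_of_mem _ (mem_map_equiv.mpr (by simpa [e] using hi)))
    simp [columnIndicator, this]

variable [Fintype α]

lemma sum_mul_columnIndicator (ha : Function.Bijective a) {f : Fin (n + 1) → ℂ} {g : α → ℂ}
    (hfg : ∀ i, f i.castSucc = g (a i)) :
    ∑ j, f j * columnIndicator a S j = ∑ v ∈ S, g v := by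
  simp only [Fin.sum_univ_castSucc, columnIndicator, Fin.snoc_castSucc, Fin.snoc_last, hfg,
    mul_ite, mul_one, mul_zero, add_zero]
  rw [ha.sum_comp fun v => if v ∈ S then g v else 0, sum_ite_mem, univ_inter]

lemma sum_norm_sq_columnIndicator (ha : Function.Bijective a) :
    ∑ j, ‖columnIndicator a S j‖ ^ 2 = #S := by
  simp only [Fin.sum_univ_castSucc, columnIndicator, Fin.snoc_castSucc, Fin.snoc_last,
    apply_ite (‖·‖ ^ 2), norm_one, norm_zero]
  rw [ha.sum_comp fun v => if v ∈ S then (1 : ℝ) ^ 2 else 0 ^ 2]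
  simp

end ColumnIndicator

lemma ZMod.stdAddChar_ne_one {p : ℕ} [NeZero p] [Nontrivial (ZMod p)] :
    (ZMod.stdAddChar : AddChar (ZMod p) ℂ) ≠ 1 := fun h =>
  one_ne_zero <| ZMod.injective_stdAddChar (by rw [h, AddChar.one_apply, AddChar.map_zero_eq_one])

section Paley

variable {p : ℕ}

lemma paleyChar_eq_one_iff {x : ZMod p} : paleyChar p x = 1 ↔ x ≠ 0 ∧ IsSquare x := by
  unfold paleyChar
  split_ifs <;> simp_all

lemma paleyPsi_eq_stdAddChar [NeZero p] (x : ZMod p) : paleyPsi p x = ZMod.stdAddChar x := by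
  rw [ZMod.stdAddChar_apply, ZMod.toCircle_apply]
  rfl

lemma two_mul_sum_nonzeroSquares_stdAddChar_add_one_sq [Fact p.Prime] (hp4 : p % 4 = 1) :
    (2 * ∑ c ∈ nonzeroSquares (ZMod p), ZMod.stdAddChar c + 1) ^ 2 = (p : ℂ) := by
  rw [← gaussSum_quadraticChar_eq_two_mul_sum_add_one ZMod.stdAddChar_ne_one,
    gaussSum_quadraticChar_sq (by rw [ZMod.ringChar_zmod_n]; omega)
      (ZMod.exists_sq_eq_neg_one_iff.mpr (by omega)) ZMod.stdAddChar_ne_one, ZMod.card]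

lemma paleyMatrix_zero_castSucc (a : Fin p → ZMod p) (b : Fin ((p - 1) / 2) → ZMod p)
    (i : Fin p) : paleyMatrix p a b 0 i.castSucc = 1 / √p := by
  simp [paleyMatrix]

lemma paleyMatrix_succ_castSucc [NeZero p] (a : Fin p → ZMod p) (b : Fin ((p - 1) / 2) → ZMod p)
    (k : Fin ((p - 1) / 2)) (i : Fin p) :
    paleyMatrix p a b k.succ i.castSucc = √(2 / p) * ZMod.stdAddChar (b k * a i) := by
  simp [paleyMatrix, paleyPsi_eq_stdAddChar]

lemma sum_norm_sq_paleyMatrix_mul_columnIndicator [NeZero p] {a : Fin p → ZMod p}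
    (b : Fin ((p - 1) / 2) → ZMod p) (ha : Function.Bijective a) (S : Finset (ZMod p)) :
    ∑ m, ‖∑ j, paleyMatrix p a b m j * columnIndicator a S j‖ ^ 2 =
      #S ^ 2 / p + 2 / p * ∑ k, ‖∑ v ∈ S, ZMod.stdAddChar (b k * v)‖ ^ 2 := by
  rw [Fin.sum_univ_succ, mul_sum,
    sum_mul_columnIndicator S ha (g := fun _ => 1 / √p) (paleyMatrix_zero_castSucc a b)]
  congr 1
  · simp [mul_pow, inv_pow, sq_abs, Real.sq_sqrt (Nat.cast_nonneg p), div_eq_mul_inv]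
  · refine sum_congr rfl fun k _ => ?_
    rw [sum_mul_columnIndicator S ha
      (g := fun v => √(2 / p) * ZMod.stdAddChar (b k * v)) (paleyMatrix_succ_castSucc a b k),
      ← mul_sum, norm_mul, mul_pow, Complex.norm_real, Real.norm_of_nonneg (Real.sqrt_nonneg _),
      Real.sq_sqrt (by positivity)]

lemma sum_norm_sq_paleyMatrix_mul_columnIndicator_of_pairwise_isSquare [Fact p.Prime]
    (hp : Odd p) {a : Fin p → ZMod p} {b : Fin ((p - 1) / 2) → ZMod p}
    (ha : Function.Bijective a) (hb : Function.Injective b)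
    (hbr : Set.range b = {x : ZMod p | x ≠ 0 ∧ IsSquare x}) {S : Finset (ZMod p)}
    (hS : (S : Set (ZMod p)).Pairwise fun v w => IsSquare (v - w)) :
    ((∑ m, ‖∑ j, paleyMatrix p a b m j * columnIndicator a S j‖ ^ 2 : ℝ) : ℂ) =
      #S + #S * (#S - 1) * (2 * ∑ c ∈ nonzeroSquares (ZMod p), ZMod.stdAddChar c + 1) / p := by
  have himage : univ.image b = nonzeroSquares (ZMod p) := by
    ext c
    simpa using congrArg (c ∈ ·) hbr
  have hcard : ((#(nonzeroSquares (ZMod p)) : ℕ) : ℂ) = (p - 1) / 2 := by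
    rw [← himage, card_image_of_injective _ hb, card_univ, Fintype.card_fin]
    obtain ⟨m, rfl⟩ := hp
    simp
  have hsum := sum_norm_sq_sum_addChar_mul_of_pairwise_isSquare ZMod.stdAddChar hS
  rw [← himage, sum_image fun k _ l _ h => hb h, himage, hcard] at hsum
  rw [sum_norm_sq_paleyMatrix_mul_columnIndicator b ha]
  push_cast at hsum ⊢
  rw [hsum]
  have : (p : ℂ) ≠ 0 := by exact_mod_cast (Fact.out : p.Prime).ne_zero
  field_simp
  ring

end Paley

theorem rip_implies_clique_bound_general (p : ℕ) [Fact p.Prime] (hp4 : p % 4 = 1)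
    (a : Fin p → ZMod p) (ha : Function.Bijective a)
    (b : Fin ((p - 1) / 2) → ZMod p) (hb : Function.Injective b)
    (hbr : Set.range b = {x : ZMod p | x ≠ 0 ∧ IsSquare x})
    (K : ℕ) (δ : ℝ) (hδ0 : 0 ≤ δ)
    (hRIP : RIP (paleyMatrix p a b) K δ) :
    ∀ S : Finset (ZMod p),
      (∀ x ∈ S, ∀ y ∈ S, x ≠ y → paleyChar p (x - y) = 1) →
      S.card ≤ K → (S.card : ℝ) ≤ δ * Real.sqrt p + 1 := by
  intro S hS hcard
  have hclique : (S : Set (ZMod p)).Pairwise fun v w => IsSquare (v - w) :=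
    fun v hv w hw hvw => (paleyChar_eq_one_iff.mp (hS v hv w hw hvw)).2
  obtain ⟨hlow, hupp⟩ := hRIP _ (sparseLe_columnIndicator S ha hcard)
  rw [sum_norm_sq_columnIndicator S ha] at hlow hupp
  have hE := sum_norm_sq_paleyMatrix_mul_columnIndicator_of_pairwise_isSquare
    (Nat.odd_iff.mpr (by omega)) ha hb hbr hclique
  have hsqrt : (p : ℂ) = (√p : ℂ) ^ 2 := by
    rw [← Complex.ofReal_pow, Real.sq_sqrt (Nat.cast_nonneg p), Complex.ofReal_natCast]
  obtain ⟨r, hgr, hr⟩ : ∃ r : ℝ, 2 * ∑ c ∈ nonzeroSquares (ZMod p), ZMod.stdAddChar c + 1 = r ∧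
      (r = √p ∨ r = -√p) := by
    rcases sq_eq_sq_iff_eq_or_eq_neg.mp
      ((two_mul_sum_nonzeroSquares_stdAddChar_add_one_sq hp4).trans hsqrt) with h | h
    exacts [⟨_, h, .inl rfl⟩, ⟨-√p, by simpa using h, .inr rfl⟩]
  rw [hgr, hsqrt] at hE
  exact le_mul_add_one_of_near_isometry
    (Real.sqrt_pos.mpr (Nat.cast_pos.mpr (Fact.out : p.Prime).pos)) hδ0 (Nat.cast_nonneg _) hr
    (by exact_mod_cast hE) hlow hupp

theorem rip_implies_clique_bound (p : ℕ) [Fact p.Prime] (hp4 : p % 4 = 1)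
    (a : Fin p → ZMod p) (ha : Function.Bijective a) (ha0 : a 0 = 0)
    (b : Fin ((p - 1) / 2) → ZMod p) (hb : Function.Injective b)
    (hbr : Set.range b = {x : ZMod p | x ≠ 0 ∧ IsSquare x})
    (K : ℕ) (δ : ℝ) (hK : K ≤ (p + 1) / 2) (hδ0 : 0 ≤ δ) (hδ1 : δ < 1)
    (hRIP : RIP (paleyMatrix p a b) K δ) :
    ∀ S : Finset (ZMod p),
      (∀ x ∈ S, ∀ y ∈ S, x ≠ y → paleyChar p (x - y) = 1) →
      S.card ≤ K → (S.card : ℝ) ≤ δ * Real.sqrt p + 1 :=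
  rip_implies_clique_bound_general p hp4 a ha b hb hbr K δ hδ0 hRIP
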